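/- Let Λ_1, …, Λ_n be orthogonal projections on ℂ^d, let Λ := (1/n) Σ_{j=1}^n Λ_j, let ρ be a density matrix on ℂ^d, let 0 < ε < 1, and set N := ⌈ n/(1−ε) ⌉. Let Q denote the orthogonal projection onto the span of the eigenvectors of Λ with eigenvalue at least 1/(2N). If there exists an index i with tr(Λ_i ρ) ≥ 1−ε, then tr(Q ρ) ≥ (1−ε)²/4. -/

import Mathlib

/-!
In the inner product `⟪X, Y⟫ = tr(Y ρ Xᴴ)` that `ρ` induces on matrices, left multiplication by
a Hermitian projection is an orthogonal projection. Put `L = Λ_i`, `P = 1 - Q`,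
`τ = tr(Lρ) = ‖L‖²` and `r = tr(LPLρ) = ‖PL‖²`. Plane geometry, using only `1 - L ⊥ L` and
`PL ⊥ QL`, gives `√tr(Qρ) = ‖Q‖ ≥ ‖QL‖ - ‖1 - L‖ ‖PL‖ / ‖L‖ = √(τ - r) - √(1 - τ) √(r / τ)`.
On the range of `P` the average `Λ` is below `δ = 1/(2N)`, so `PLP ≤ nδ P`, and the C⋆-identity
`‖LPL‖ = ‖PL‖² = ‖PLP‖` turns this into `LPL ≤ nδ L`, i.e. `r ≤ nδ τ ≤ (1 - ε) τ / 2`. With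
`1 - ε ≤ τ ≤ 1` the lower bound is then at least `(1 - ε) / 2`.
-/

open Matrix
open scoped ComplexOrder BigOperators

/-- The orthogonal projection onto the span of the eigenvectors of a Hermitian matrix `A`
with eigenvalue at least `δ`. -/
noncomputable def specProj {d : ℕ} {A : Matrix (Fin d) (Fin d) ℂ} (hA : A.IsHermitian)
    (δ : ℝ) : Matrix (Fin d) (Fin d) ℂ :=
  (hA.eigenvectorUnitary : Matrix (Fin d) (Fin d) ℂ) *
    Matrix.diagonal (fun i => if δ ≤ hA.eigenvalues i then (1 : ℂ) else 0) *
    (hA.eigenvectorUnitary : Matrix (Fin d) (Fin d) ℂ)ᴴ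

open scoped MatrixOrder InnerProductSpace

theorem IsStarProjection.mul_mul_le_smul_of_mul_mul_le {A : Type*} [CStarAlgebra A] [PartialOrder A]
    [StarOrderedRing A] {p l : A} (hp : IsStarProjection p) (hl : IsStarProjection l) {c : ℝ}
    (hc : 0 ≤ c) (h : p * l * p ≤ c • p) : l * p * l ≤ c • l := by
  have hplp : ‖p * l * p‖ ≤ c := by
    have h0 : 0 ≤ p * l * p := by
      simpa [hp.isSelfAdjoint.star_eq] using star_left_conjugate_nonneg hl.nonneg p
    refine (CStarAlgebra.norm_le_iff_le_algebraMap _ hc h0).2 (h.trans ?_)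
    rw [Algebra.algebraMap_eq_smul_one]
    exact smul_le_smul_of_nonneg_left hp.le_one hc
  have hnorm : ‖l * p * l‖ = ‖p * l * p‖ := by
    have h1 : star (p * l) * (p * l) = l * p * l := by
      rw [star_mul, hp.isSelfAdjoint.star_eq, hl.isSelfAdjoint.star_eq, mul_assoc, ← mul_assoc p,
        hp.isIdempotentElem.eq, mul_assoc]
    have h2 : p * l * star (p * l) = p * l * p := by
      rw [star_mul, hp.isSelfAdjoint.star_eq, hl.isSelfAdjoint.star_eq, mul_assoc, ← mul_assoc l,
        hl.isIdempotentElem.eq, mul_assoc]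
    rw [← h1, ← h2, CStarRing.norm_star_mul_self, CStarRing.norm_self_mul_star]
  calc l * p * l = star l * (l * p * l) * l := by
        rw [hl.isSelfAdjoint.star_eq, ← mul_assoc, ← mul_assoc, hl.isIdempotentElem.eq,
          mul_assoc _ l l, hl.isIdempotentElem.eq]
    _ ≤ ‖l * p * l‖ • (star l * l) := CStarAlgebra.star_left_conjugate_le_norm_smul
    _ ≤ c • l := by
        rw [hl.isSelfAdjoint.star_eq, hl.isIdempotentElem.eq]
        exact smul_le_smul_of_nonneg_right (hnorm ▸ hplp) hl.nonneg

theorem IsStarProjection.star_mul_self {R : Type*} [Mul R] [Star R] {p : R}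
    (hp : IsStarProjection p) : star p * p = p := by
  rw [hp.isSelfAdjoint.star_eq, hp.isIdempotentElem.eq]

theorem IsStarProjection.star_mul_mul_self {R : Type*} [Semigroup R] [StarMul R] {p : R}
    (hp : IsStarProjection p) (x : R) : star (p * x) * (p * x) = star x * p * x := by
  rw [star_mul, mul_assoc, ← mul_assoc (star p), hp.star_mul_self, mul_assoc]

section InnerProduct

variable {𝕜 E : Type*} [RCLike 𝕜] [SeminormedAddCommGroup E] [InnerProductSpace 𝕜 E]

open RCLike

theorem norm_sub_mul_div_le_norm_of_inner_eq {x g q y : E} (hg : ⟪x - g, g⟫_𝕜 = 0)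
    (hq : ⟪g - q, q⟫_𝕜 = 0) (hy : ⟪x, q⟫_𝕜 = ⟪y, q⟫_𝕜) :
    ‖q‖ - ‖x - g‖ * ‖g - q‖ / ‖g‖ ≤ ‖y‖ := by
  set w := x - g
  set p := g - q
  have hgpq : g = p + q := by simp [p]
  have hgq : re ⟪g, q⟫_𝕜 = ‖q‖ ^ 2 := by
    rw [hgpq, inner_add_left, hq, zero_add, inner_self_eq_norm_sq]
  have hpyth : ‖g‖ ^ 2 = ‖p‖ ^ 2 + ‖q‖ ^ 2 := by
    rw [hgpq, norm_add_pow_two (𝕜 := 𝕜), hq, map_zero, mul_zero, add_zero]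
  rcases (norm_nonneg q).eq_or_lt with hq0 | hq0
  · rw [← hq0, zero_sub]
    exact (neg_nonpos.2 (by positivity)).trans (norm_nonneg y)
  have hg0 : 0 < ‖g‖ := by nlinarith [norm_nonneg g, norm_nonneg p]
  -- `v` is the component of `q` orthogonal to `g`; as `w ⊥ g`, it pairs with `w` as `q` does
  set v := q - ((‖q‖ ^ 2 / ‖g‖ ^ 2 : ℝ) : 𝕜) • g
  have hv : ‖v‖ = ‖q‖ * ‖p‖ / ‖g‖ := by
    rw [eq_div_iff hg0.ne', ← pow_left_inj₀ (by positivity) (by positivity) two_ne_zero, mul_pow,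
      norm_sub_pow_two (𝕜 := 𝕜), inner_smul_right, norm_smul, RCLike.norm_ofReal, mul_re, ofReal_re,
      ofReal_im, zero_mul, sub_zero, inner_re_symm, hgq]
    rw [abs_of_nonneg (by positivity)]
    field_simp
    nlinarith [hpyth]
  have hxq : re ⟪x, q⟫_𝕜 = ‖q‖ ^ 2 + re ⟪w, v⟫_𝕜 := by
    rw [show x = g + w by simp [w], inner_add_left, map_add, hgq, inner_sub_right,
      inner_smul_right, hg, mul_zero, sub_zero]
  have hwv : -(‖w‖ * ‖v‖) ≤ re ⟪w, v⟫_𝕜 := by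
    simpa [inner_neg_left, neg_le] using re_inner_le_norm (𝕜 := 𝕜) (-w) v
  have hmul : ‖q‖ * (‖q‖ - ‖w‖ * ‖p‖ / ‖g‖) ≤ ‖q‖ * ‖y‖ := by
    calc ‖q‖ * (‖q‖ - ‖w‖ * ‖p‖ / ‖g‖) = ‖q‖ ^ 2 - ‖w‖ * ‖v‖ := by rw [hv]; ring
      _ ≤ re ⟪x, q⟫_𝕜 := by linarith
      _ ≤ ‖q‖ * ‖y‖ := by rw [hy, mul_comm]; exact re_inner_le_norm y q
  exact le_of_mul_le_mul_left hmul hq0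

end InnerProduct

theorem half_le_sqrt_sub_sqrt_mul_sqrt_div {t τ r : ℝ} (ht : 0 < t) (htτ : t ≤ τ) (hτ : τ ≤ 1)
    (hr : r ≤ t / 2 * τ) :
    t / 2 ≤ √(τ - r) - √(1 - τ) * √r / √τ := by
  have hτ0 : 0 < τ := ht.trans_le htτ
  have hfirst : √(t * (1 - t / 2)) ≤ √(τ - r) := Real.sqrt_le_sqrt (by nlinarith)
  have hsecond : √(1 - τ) * √r / √τ ≤ √(1 - t) * √(t / 2) := by
    rw [mul_div_assoc]
    refine mul_le_mul (Real.sqrt_le_sqrt (by linarith)) ?_ (by positivity) (Real.sqrt_nonneg _)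
    rw [div_le_iff₀ (Real.sqrt_pos.2 hτ0), ← Real.sqrt_mul (by linarith)]
    exact Real.sqrt_le_sqrt hr
  -- the extreme case `τ = t`, `r = tτ/2`; equality holds at `t = 2/3`
  have hworst : t / 2 + √(1 - t) * √(t / 2) ≤ √(t * (1 - t / 2)) := by
    have hv : √(1 - t) * √(t / 2) ≤ 1 / 2 - t / 4 := by
      rw [← Real.sqrt_mul (by linarith), Real.sqrt_le_iff]
      constructor <;> nlinarith [sq_nonneg (1 / 2 - 3 * t / 4)]
    have hv2 : (√(1 - t) * √(t / 2)) ^ 2 = (1 - t) * (t / 2) := by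
      rw [mul_pow, Real.sq_sqrt (by linarith), Real.sq_sqrt (by linarith)]
    rw [Real.le_sqrt (by positivity) (by nlinarith)]
    nlinarith [Real.sqrt_nonneg (1 - t), Real.sqrt_nonneg (t / 2)]
  linarith

theorem natCast_mul_one_div_two_mul_ceil_le (n : ℕ) {t : ℝ} (ht : 0 < t) :
    (n : ℝ) * (1 / (2 * ⌈(n : ℝ) / t⌉₊)) ≤ t / 2 := by
  rcases Nat.eq_zero_or_pos ⌈(n : ℝ) / t⌉₊ with hN | hN
  · rw [hN]
    simp only [Nat.cast_zero, mul_zero, div_zero, mul_zero]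
    positivity
  have hle : (n : ℝ) ≤ ⌈(n : ℝ) / t⌉₊ * t := (div_le_iff₀ ht).1 (Nat.le_ceil _)
  rw [mul_one_div, div_le_div_iff₀ (by positivity) two_pos]
  linarith

section SpectralProjection

variable {d : ℕ} {A : Matrix (Fin d) (Fin d) ℂ} (hA : A.IsHermitian) (δ : ℝ)

theorem specProj_eq_cfc : specProj hA δ = cfc (fun x => if δ ≤ x then 1 else 0) A := by
  rw [hA.cfc_eq, IsHermitian.cfc, Unitary.conjStarAlgAut_apply, specProj, star_eq_conjTranspose]
  congr 3
  funext i
  split_ifs <;> simp [*]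

theorem isStarProjection_specProj : IsStarProjection (specProj hA δ) := by
  refine ⟨?_, ?_⟩
  · rw [specProj_eq_cfc, IsIdempotentElem, ← cfc_mul _ _ _ (A.finite_real_spectrum.continuousOn _)
      (A.finite_real_spectrum.continuousOn _)]
    congr 1
    funext x
    split_ifs <;> simp
  · rw [specProj_eq_cfc]
    exact cfc_predicate _ _

theorem one_sub_specProj_mul_mul_le :
    (1 - specProj hA δ) * A * (1 - specProj hA δ) ≤ δ • (1 - specProj hA δ) := by
  have hcont (f : ℝ → ℝ) : ContinuousOn f (spectrum ℝ A) := A.finite_real_spectrum.continuousOn f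
  have hP : 1 - specProj hA δ = cfc (fun x => 1 - if δ ≤ x then 1 else 0) A := by
    rw [specProj_eq_cfc, cfc_sub _ _ _ (hcont _) (hcont _), cfc_const_one ℝ A]
  rw [hP, ← cfc_const_mul _ _ _ (hcont _)]
  nth_rw 2 [← cfc_id' ℝ A]
  rw [← cfc_mul _ _ _ (hcont _) (hcont _), ← cfc_mul _ _ _ (hcont _) (hcont _)]
  refine cfc_mono (hf := hcont _) (hg := hcont _) fun x _ => ?_
  split_ifs with hx
  · simp
  · simpa using (not_le.1 hx).le

end SpectralProjection

theorem mul_one_sub_specProj_mul_le_smul {d n : ℕ} {Λ : Fin n → Matrix (Fin d) (Fin d) ℂ}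
    (hΛ : ∀ j, IsStarProjection (Λ j)) (havg : ((n : ℂ)⁻¹ • ∑ j, Λ j).IsHermitian) {δ : ℝ}
    (hδ : 0 ≤ δ) (i : Fin n) :
    Λ i * (1 - specProj havg δ) * Λ i ≤ ((n : ℝ) * δ) • Λ i := by
  set P := 1 - specProj havg δ
  have hP : IsStarProjection P := (isStarProjection_specProj havg δ).one_sub
  have hPLP : P * Λ i * P ≤ ((n : ℝ) * δ) • P := calc
    P * Λ i * P ≤ P * (∑ j, Λ j) * P :=
      hP.isSelfAdjoint.conjugate_le_conjugate
        (Finset.single_le_sum (fun j _ => (hΛ j).nonneg) (Finset.mem_univ i))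
    _ = (n : ℝ) • (P * ((n : ℂ)⁻¹ • ∑ j, Λ j) * P) := by
      rw [mul_smul_comm, smul_mul_assoc, Nat.cast_smul_eq_nsmul ℝ, ← Nat.cast_smul_eq_nsmul ℂ,
        smul_inv_smul₀ (Nat.cast_ne_zero.2 i.pos.ne')]
    _ ≤ (n : ℝ) • (δ • P) :=
      smul_le_smul_of_nonneg_left (one_sub_specProj_mul_mul_le havg δ) (Nat.cast_nonneg n)
    _ = ((n : ℝ) * δ) • P := smul_smul _ _ _
  open scoped Matrix.Norms.L2Operator in
  exact hP.mul_mul_le_smul_of_mul_mul_le (hΛ i) (by positivity) hPLP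

section DensityMatrix

variable {d : ℕ} {ρ : Matrix (Fin d) (Fin d) ℂ}

theorem re_trace_mul_nonneg {M : Matrix (Fin d) (Fin d) ℂ} (hM : 0 ≤ M)
    (hρ : ρ.PosSemidef) : 0 ≤ (M * ρ).trace.re := by
  have hsq : (CFC.sqrt ρ)ᴴ = CFC.sqrt ρ := (CFC.sqrt_nonneg ρ).isSelfAdjoint
  rw [← CFC.sqrt_mul_sqrt_self ρ hρ.nonneg, ← mul_assoc, trace_mul_comm, ← mul_assoc]
  nth_rw 1 [← hsq]
  exact (RCLike.nonneg_iff.mp (hM.posSemidef.conjTranspose_mul_mul_same _).trace_nonneg).1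

theorem re_trace_mul_le_of_le {M N : Matrix (Fin d) (Fin d) ℂ} (hMN : M ≤ N)
    (hρ : ρ.PosSemidef) : (M * ρ).trace.re ≤ (N * ρ).trace.re := by
  have := re_trace_mul_nonneg (sub_nonneg.2 hMN) hρ
  rwa [sub_mul, trace_sub, Complex.sub_re, sub_nonneg] at this

theorem sqrt_sub_mul_div_le_sqrt_re_trace_mul (hρ : ρ.PosSemidef) (hρtr : ρ.trace = 1)
    {L Q : Matrix (Fin d) (Fin d) ℂ} (hL : IsStarProjection L) (hQ : IsStarProjection Q) :
    √((L * ρ).trace.re - (L * (1 - Q) * L * ρ).trace.re) -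
        √(1 - (L * ρ).trace.re) * √((L * (1 - Q) * L * ρ).trace.re) / √((L * ρ).trace.re) ≤
      √((Q * ρ).trace.re) := by
  -- the GNS inner product of `ρ`: `1` is a unit vector and `tr(Mρ) = ‖M‖²` for a projection `M`
  let _ := ρ.toMatrixSeminormedAddCommGroup hρ
  let _ := ρ.toMatrixInnerProductSpace hρ
  have inner_def (X Y : Matrix (Fin d) (Fin d) ℂ) : ⟪X, Y⟫_ℂ = (Y * ρ * Xᴴ).trace := rfl
  have norm_def (X : Matrix (Fin d) (Fin d) ℂ) : ‖X‖ = √((star X * X * ρ).trace.re) := by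
    rw [norm_eq_sqrt_re_inner (𝕜 := ℂ), inner_def, trace_mul_comm, ← mul_assoc]
    rfl
  have inner_mul_left {M : Matrix (Fin d) (Fin d) ℂ} (hM : IsStarProjection M) (X Y) :
      ⟪M * X, Y⟫_ℂ = ⟪X, M * Y⟫_ℂ := by
    rw [inner_def, inner_def, conjTranspose_mul, ← star_eq_conjTranspose M,
      hM.isSelfAdjoint.star_eq, ← mul_assoc, trace_mul_comm, mul_assoc, mul_assoc, mul_assoc]
  have inner_orth {M : Matrix (Fin d) (Fin d) ℂ} (hM : IsStarProjection M) (X Y) :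
      ⟪X - M * X, M * Y⟫_ℂ = 0 := by
    rw [← inner_mul_left hM, mul_sub, ← mul_assoc, hM.isIdempotentElem.eq, sub_self,
      inner_zero_left]
  have key := norm_sub_mul_div_le_norm_of_inner_eq (x := (1 : Matrix (Fin d) (Fin d) ℂ)) (g := L)
    (q := Q * L) (y := Q) (by simpa using inner_orth hL 1 1) (inner_orth hQ L L)
    (by simpa [← mul_assoc, hQ.isIdempotentElem.eq] using (inner_mul_left hQ 1 (Q * L)).symm)
  have hLstar : star L = L := hL.isSelfAdjoint.star_eq
  have hQL : ‖Q * L‖ = √((L * ρ).trace.re - (L * (1 - Q) * L * ρ).trace.re) := by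
    rw [norm_def, hQ.star_mul_mul_self, hLstar, mul_one_sub, sub_mul, hL.isIdempotentElem.eq,
      sub_mul, trace_sub, Complex.sub_re, sub_sub_cancel]
  have hLQL : ‖L - Q * L‖ = √((L * (1 - Q) * L * ρ).trace.re) := by
    rw [← one_sub_mul, norm_def, hQ.one_sub.star_mul_mul_self, hLstar]
  rwa [hQL, hLQL, norm_def, hL.one_sub.star_mul_self, sub_mul, one_mul, trace_sub, hρtr,
    Complex.sub_re, Complex.one_re, norm_def, hL.star_mul_self, norm_def, hQ.star_mul_self] at key

end DensityMatrix

theorem stmt_5_general {d n : ℕ} (Λ : Fin n → Matrix (Fin d) (Fin d) ℂ)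
    (hΛH : ∀ j, (Λ j).IsHermitian) (hΛ2 : ∀ j, Λ j * Λ j = Λ j)
    (ρ : Matrix (Fin d) (Fin d) ℂ) (hρ : ρ.PosSemidef) (hρtr : ρ.trace = 1)
    (ε : ℝ) (hε1 : ε < 1)
    (N : ℕ) (hN : N = ⌈(n : ℝ) / (1 - ε)⌉₊)
    (havg : ((((n : ℂ))⁻¹ • ∑ j, Λ j)).IsHermitian)
    (i : Fin n) (hi : 1 - ε ≤ ((Λ i * ρ).trace).re) :
    (1 - ε) ^ 2 / 4 ≤ ((specProj havg (1 / (2 * N)) * ρ).trace).re := by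
  have ht : 0 < 1 - ε := sub_pos.2 hε1
  have hΛ (j : Fin n) : IsStarProjection (Λ j) := ⟨hΛ2 j, hΛH j⟩
  have hc : (n : ℝ) * (1 / (2 * N)) ≤ (1 - ε) / 2 := by
    rw [hN]
    exact natCast_mul_one_div_two_mul_ceil_le n ht
  have hLPL := mul_one_sub_specProj_mul_le_smul hΛ havg (δ := 1 / (2 * N)) (by positivity) i
  set Q := specProj havg (1 / (2 * N))
  have hQ : IsStarProjection Q := isStarProjection_specProj havg _
  have hτ1 : (Λ i * ρ).trace.re ≤ 1 := by
    simpa [hρtr] using re_trace_mul_le_of_le (hΛ i).le_one hρ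
  have hr : (Λ i * (1 - Q) * Λ i * ρ).trace.re ≤ (1 - ε) / 2 * (Λ i * ρ).trace.re := by
    refine (re_trace_mul_le_of_le hLPL hρ).trans ?_
    rw [smul_mul_assoc, trace_smul, Complex.real_smul, Complex.re_ofReal_mul]
    exact mul_le_mul_of_nonneg_right hc (ht.le.trans hi)
  have hhalf := (half_le_sqrt_sub_sqrt_mul_sqrt_div ht hi hτ1 hr).trans
    (sqrt_sub_mul_div_le_sqrt_re_trace_mul hρ hρtr (hΛ i) hQ)
  calc (1 - ε) ^ 2 / 4 = ((1 - ε) / 2) ^ 2 := by ring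
    _ ≤ √((Q * ρ).trace.re) ^ 2 := pow_le_pow_left₀ (by positivity) hhalf 2
    _ = (Q * ρ).trace.re := Real.sq_sqrt (re_trace_mul_nonneg hQ.nonneg hρ)

/-- With `Λ = (1/n)·Σ_j Λ_j`, `N = ⌈n/(1−ε)⌉` and `Q` the spectral projector
of `Λ` onto eigenvalues `≥ 1/(2N)`: if some `Λ_i` accepts the density matrix `ρ` with
probability at least `1−ε`, then `tr(Qρ) ≥ (1−ε)²/4`. -/
theorem stmt_5 {d n : ℕ} (hn : 0 < n) (Λ : Fin n → Matrix (Fin d) (Fin d) ℂ)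
    (hΛH : ∀ j, (Λ j).IsHermitian) (hΛ2 : ∀ j, Λ j * Λ j = Λ j)
    (ρ : Matrix (Fin d) (Fin d) ℂ) (hρ : ρ.PosSemidef) (hρtr : ρ.trace = 1)
    (ε : ℝ) (hε0 : 0 < ε) (hε1 : ε < 1)
    (N : ℕ) (hN : N = ⌈(n : ℝ) / (1 - ε)⌉₊)
    (havg : ((((n : ℂ))⁻¹ • ∑ j, Λ j)).IsHermitian)
    (i : Fin n) (hi : 1 - ε ≤ ((Λ i * ρ).trace).re) :
    (1 - ε) ^ 2 / 4 ≤ ((specProj havg (1 / (2 * N)) * ρ).trace).re :=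
  stmt_5_general Λ hΛH hΛ2 ρ hρ hρtr ε hε1 N hN havg i hi
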